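/- Let (Omega, C, Gamma) be a naive convex co-compact triple and let X be a Gamma-invariant, strongly isolated collection of closed unbounded convex subsets of C. If X_1, X_2 in X are distinct, then F_Omega(∂_i X_1) ∩ F_Omega(∂_i X_2) = empty, where ∂_i X denotes the ideal boundary (closure of X intersected with the boundary of Omega) and F_Omega(A) is the union of the open faces of points of A. -/

import Mathlib

open Set Filter Topology

noncomputable section

/-- The vector space `ℝ^d`. -/
abbrev Vd (d : ℕ) := Fin d → ℝ

/-- Real projective space `P(ℝ^d)`. -/
abbrev Proj (d : ℕ) := Projectivization ℝ (Vd d)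

instance (d : ℕ) : TopologicalSpace (Proj d) :=
  instTopologicalSpaceQuotient (s := projectivizationSetoid ℝ (Vd d))

variable {d : ℕ}

/-- The affine chart associated to a nonzero linear functional `f`: a point `[v]` with
`f v ≠ 0` is sent to the representative `v / f v` in the affine hyperplane `{w : f w = 1}`. -/
def pchart (f : Vd d →ₗ[ℝ] ℝ) (x : Proj d) : Vd d := (f x.rep)⁻¹ • x.rep

/-- `C ⊆ P(ℝ^d)` is properly convex, realized in the affine chart determined by `f`:
its closure lies in the chart, and its image there is a bounded convex set. -/
structure IsPC (f : Vd d →ₗ[ℝ] ℝ) (C : Set (Proj d)) : Prop where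
  chartOK : ∀ x ∈ closure C, f (Projectivization.rep x) ≠ 0
  bounded : Bornology.IsBounded (pchart f '' C)
  convex : Convex ℝ (pchart f '' C)

/-- A properly convex domain: a nonempty open properly convex subset of `P(ℝ^d)`. -/
structure IsPCDomain (f : Vd d →ₗ[ℝ] ℝ) (Ω : Set (Proj d)) : Prop where
  pc : IsPC f Ω
  isOpen : IsOpen Ω
  nonempty : Ω.Nonempty

/-- The open projective segment `(x,y)`, computed in the affine chart of `f`. -/
def poseg (f : Vd d →ₗ[ℝ] ℝ) (x y : Proj d) : Set (Proj d) :=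
  {z | ∃ w ∈ openSegment ℝ (pchart f x) (pchart f y), ∃ hw : w ≠ 0, z = Projectivization.mk ℝ w hw}

/-- The closed projective segment `[x,y]`, computed in the affine chart of `f`. -/
def pcseg (f : Vd d →ₗ[ℝ] ℝ) (x y : Proj d) : Set (Proj d) :=
  {z | ∃ w ∈ segment ℝ (pchart f x) (pchart f y), ∃ hw : w ≠ 0, z = Projectivization.mk ℝ w hw}

/-- Parameters `t` for which `x + t(y - x)` lies in the closure of `K`. -/
def segSet (K : Set (Vd d)) (x y : Vd d) : Set ℝ := {t : ℝ | x + t • (y - x) ∈ closure K}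

/-- Hilbert distance on a bounded convex set `K` in an affine chart, via the cross ratio:
with `s = sSup`, `r = sInf` of the parameter set (so the boundary points are
`a = x + r(y-x)`, `b = x + s(y-x)`, ordered `a,x,y,b`), this is
`(1/2) log ( s(1-r) / ((s-1)(-r)) ) = (1/2) log (|x-b||y-a| / (|x-a||y-b|))`. -/
def affHilbertDist (K : Set (Vd d)) (x y : Vd d) : ℝ :=
  if x = y then 0 else
    (1/2) * Real.log ((sSup (segSet K x y) * (1 - sInf (segSet K x y))) /
      ((sSup (segSet K x y) - 1) * (- sInf (segSet K x y))))

/-- The Hilbert metric of a properly convex set `Ω`, in the chart of `f`. -/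
def hdist (f : Vd d →ₗ[ℝ] ℝ) (Ω : Set (Proj d)) (x y : Proj d) : ℝ :=
  affHilbertDist (pchart f '' Ω) (pchart f x) (pchart f y)

/-- The open face of a point `x` of the closure of an affine convex set `K`:
`x` together with all `y` in the closure such that some open segment contained in the closure
contains both `x` and `y`. -/
def affFace (K : Set (Vd d)) (x : Vd d) : Set (Vd d) :=
  insert x {y ∈ closure K | ∃ a b : Vd d, openSegment ℝ a b ⊆ closure K ∧
      x ∈ openSegment ℝ a b ∧ y ∈ openSegment ℝ a b}

/-- The open face `F_C(x)` of a point `x ∈ closure C`, for `C` properly convex in the chart of `f`. -/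
def pface (f : Vd d →ₗ[ℝ] ℝ) (C : Set (Proj d)) (x : Proj d) : Set (Proj d) :=
  insert x {y ∈ closure C | pchart f y ∈ affFace (pchart f '' C) (pchart f x)}

/-- `F_C(A) = ⋃_{x ∈ A} F_C(x)`. -/
def pfaceSet (f : Vd d →ₗ[ℝ] ℝ) (C : Set (Proj d)) (A : Set (Proj d)) : Set (Proj d) :=
  ⋃ x ∈ A, pface f C x

/-- The Hilbert metric of the open face `F_C(x)` (a properly convex set open in its span). -/
def pfaceDist (f : Vd d →ₗ[ℝ] ℝ) (C : Set (Proj d)) (x : Proj d) (p q : Proj d) : ℝ :=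
  affHilbertDist (pchart f '' pface f C x) (pchart f p) (pchart f q)

/-- The ideal boundary `∂ᵢ C = closure C ∩ ∂Ω` of a subset `C` of a domain `Ω`. -/
def idealBdry (Ω C : Set (Proj d)) : Set (Proj d) := closure C ∩ frontier Ω

/-- Linear automorphisms of `ℝ^d` (inducing projective transformations). -/
abbrev GLd (d : ℕ) := (Vd d) ≃ₗ[ℝ] (Vd d)

/-- The projective action of a linear automorphism. -/
def pact (g : GLd d) (x : Proj d) : Proj d := Projectivization.map g.toLinearMap g.injective x

/-- Orbit of a point under a set of linear automorphisms. -/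
def orbitOf (S : Set (GLd d)) (p : Proj d) : Set (Proj d) := {q | ∃ γ ∈ S, q = pact γ p}

/-- The limit set of a set of automorphisms of `Ω`: all boundary accumulation points of orbits. -/
def limitSetOf (Ω : Set (Proj d)) (S : Set (GLd d)) : Set (Proj d) :=
  frontier Ω ∩ ⋃ p ∈ Ω, closure (orbitOf S p)

/-- The limit set of a subgroup. -/
def limitSet (Ω : Set (Proj d)) (Γ : Subgroup (GLd d)) : Set (Proj d) :=
  limitSetOf Ω {γ : GLd d | γ ∈ Γ}

/-- Open `r`-neighborhood of `A` in `(Ω, hdist)`. -/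
def hnbhd (f : Vd d →ₗ[ℝ] ℝ) (Ω A : Set (Proj d)) (r : ℝ) : Set (Proj d) :=
  {x ∈ Ω | ∃ a ∈ A, hdist f Ω x a < r}

/-- Open metric ball in `(Ω, hdist)`. -/
def hball (f : Vd d →ₗ[ℝ] ℝ) (Ω : Set (Proj d)) (x₀ : Proj d) (r : ℝ) : Set (Proj d) :=
  {y ∈ Ω | hdist f Ω x₀ y < r}

/-- The Hilbert-metric diameter of `A` is at most `D`. -/
def DiamLE (f : Vd d →ₗ[ℝ] ℝ) (Ω A : Set (Proj d)) (D : ℝ) : Prop :=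
  ∀ x ∈ A, ∀ y ∈ A, hdist f Ω x y ≤ D

/-- `X` is unbounded in `(Ω, hdist)`. -/
def HUnbounded (f : Vd d →ₗ[ℝ] ℝ) (Ω X : Set (Proj d)) : Prop := ¬ ∃ D : ℝ, DiamLE f Ω X D

/-- A strongly isolated collection: intersections of `r`-neighborhoods of distinct
members have uniformly bounded diameter. -/
def StronglyIsolated (f : Vd d →ₗ[ℝ] ℝ) (Ω : Set (Proj d)) (𝒳 : Set (Set (Proj d))) : Prop :=
  ∀ r > (0:ℝ), ∃ D > (0:ℝ), ∀ X₁ ∈ 𝒳, ∀ X₂ ∈ 𝒳, X₁ ≠ X₂ →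
    DiamLE f Ω (hnbhd f Ω X₁ r ∩ hnbhd f Ω X₂ r) D

/-- A `Γ`-invariant collection of sets. -/
def GInvariant (Γ : Subgroup (GLd d)) (𝒳 : Set (Set (Proj d))) : Prop :=
  ∀ γ ∈ Γ, ∀ X ∈ 𝒳, pact γ '' X ∈ 𝒳

/-- A naive convex co-compact triple `(Ω, C, Γ)`. -/
structure IsNCC (f : Vd d →ₗ[ℝ] ℝ) (Ω C : Set (Proj d)) (Γ : Subgroup (GLd d)) : Prop where
  dom : IsPCDomain f Ω
  subset : C ⊆ Ω
  nonempty : C.Nonempty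
  closedIn : closure C ∩ Ω ⊆ C
  convex : Convex ℝ (pchart f '' C)
  invΩ : ∀ γ ∈ Γ, pact γ '' Ω = Ω
  invC : ∀ γ ∈ Γ, pact γ '' C = C
  discrete : ∀ K : Set (Proj d), K ⊆ Ω → IsCompact K →
      {γ : GLd d | γ ∈ Γ ∧ (pact γ '' K ∩ K).Nonempty}.Finite
  cocompact : ∃ K : Set (Proj d), K ⊆ C ∧ IsCompact K ∧ ∀ x ∈ C, ∃ γ ∈ Γ, pact γ x ∈ K

/-- `𝒳` is a collection of closed unbounded convex subsets of `C`. -/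
structure IsCUC (f : Vd d →ₗ[ℝ] ℝ) (Ω C : Set (Proj d)) (𝒳 : Set (Set (Proj d))) : Prop where
  sub : ∀ X ∈ 𝒳, X ⊆ C
  closedIn : ∀ X ∈ 𝒳, closure X ∩ Ω ⊆ X
  unbdd : ∀ X ∈ 𝒳, HUnbounded f Ω X
  convex : ∀ X ∈ 𝒳, Convex ℝ (pchart f '' X)

/-- The standard `k`-dimensional projective simplex, with vertices `e_0, …, e_k`. -/
def stdSimplexP (d k : ℕ) : Set (Proj d) :=
  {x : Proj d | ∃ (c : Vd d) (hc : c ≠ 0), (∀ i : Fin d, (i : ℕ) ≤ k → 0 < c i) ∧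
      (∀ i : Fin d, k < (i : ℕ) → c i = 0) ∧ x = Projectivization.mk ℝ c hc}

/-- `S` is a `k`-dimensional projective simplex. -/
def IsSimplex (k : ℕ) (S : Set (Proj d)) : Prop :=
  ∃ g : GLd d, pact g '' stdSimplexP d k = S

/-- `S` is properly embedded in `C` (the inclusion is a proper map). -/
def ProperlyEmbedded (C S : Set (Proj d)) : Prop := S ⊆ C ∧ closure S ∩ C ⊆ S

/-- `𝒳` coarsely contains the properly embedded simplices of `C` of dimension at least two. -/
def CoarselyContainsSimplices (f : Vd d →ₗ[ℝ] ℝ) (Ω C : Set (Proj d))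
    (𝒳 : Set (Set (Proj d))) : Prop :=
  ∃ D > (0:ℝ), ∀ k : ℕ, 2 ≤ k → ∀ S : Set (Proj d), IsSimplex k S → ProperlyEmbedded C S →
    ∃ X ∈ 𝒳, S ⊆ hnbhd f Ω X D

/-- A peripheral family of the naive convex co-compact triple `(Ω, C, Γ)`. -/
def IsPeripheralFamily (f : Vd d →ₗ[ℝ] ℝ) (Ω C : Set (Proj d)) (Γ : Subgroup (GLd d))
    (𝒳 : Set (Set (Proj d))) : Prop :=
  GInvariant Γ 𝒳 ∧ StronglyIsolated f Ω 𝒳 ∧ CoarselyContainsSimplices f Ω C 𝒳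

/-- `Hausdorff distance between A and B (w.r.t. the distance function ρ) is at most M`. -/
def HausdorffLE {α : Type*} (ρ : α → α → ℝ) (A B : Set α) (M : ℝ) : Prop :=
  (∀ a ∈ A, ∀ ε > (0:ℝ), ∃ b ∈ B, ρ a b < M + ε) ∧
  (∀ b ∈ B, ∀ ε > (0:ℝ), ∃ a ∈ A, ρ a b < M + ε)

/-- The closed convex hull of `A ⊆ closure Ω` taken inside `closure Ω`, in the chart of `f`. -/
def projConvHull (f : Vd d →ₗ[ℝ] ℝ) (Ω A : Set (Proj d)) : Set (Proj d) :=
  {z ∈ closure Ω | pchart f z ∈ closure (convexHull ℝ (pchart f '' A))}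

/-- The convex core of `Γ`: the closed convex hull of the limit set, intersected with `Ω`. -/
def pcore (f : Vd d →ₗ[ℝ] ℝ) (Ω : Set (Proj d)) (Γ : Subgroup (GLd d)) : Set (Proj d) :=
  projConvHull f Ω (limitSet Ω Γ) ∩ Ω

/-- `Γ` is a convex co-compact subgroup of `Aut(Ω)`. -/
structure IsCCSubgroup (f : Vd d →ₗ[ℝ] ℝ) (Ω : Set (Proj d)) (Γ : Subgroup (GLd d)) : Prop where
  dom : IsPCDomain f Ω
  invΩ : ∀ γ ∈ Γ, pact γ '' Ω = Ω
  discrete : ∀ K : Set (Proj d), K ⊆ Ω → IsCompact K →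
      {γ : GLd d | γ ∈ Γ ∧ (pact γ '' K ∩ K).Nonempty}.Finite
  coreNonempty : (pcore f Ω Γ).Nonempty
  cocompact : ∃ K : Set (Proj d), K ⊆ pcore f Ω Γ ∧ IsCompact K ∧
      ∀ x ∈ pcore f Ω Γ, ∃ γ ∈ Γ, pact γ x ∈ K

/-!
Suppose `y` lies in the open faces of `x₁ ∈ ∂ᵢX₁` and of `x₂ ∈ ∂ᵢX₂`. In an affine chart, both
`x₁` and `x₂` share an open segment of `closure Ω` with `y`, so by convexity the segment
`[x₁, x₂]` extends a little beyond both of its endpoints inside `closure Ω`. Choose `pᵢ ∈ Xᵢ`.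
The rays `t ↦ pᵢ + t (xᵢ - pᵢ)`, `0 ≤ t < 1`, stay in `Xᵢ`, and the points with equal parameter
lie on a chord of `Ω` extending a fixed amount beyond both of them (it is a convex combination of
the extended chords through `p₁, p₂` and through `x₁, x₂`), so their Hilbert distance is
uniformly bounded. Hence the whole ray of `X₁` lies in the `r`-neighbourhoods of both `X₁` and
`X₂` for one `r`, while it is unbounded because it runs into `x₁ ∈ ∂Ω`: this contradicts strong
isolation.
-/

section Chart

variable (f : Vd d →ₗ[ℝ] ℝ)

lemma pchart_mk {v : Vd d} (hv : v ≠ 0) :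
    pchart f (Projectivization.mk ℝ v hv) = (f v)⁻¹ • v := by
  obtain ⟨a, ha⟩ := Projectivization.exists_smul_eq_mk_rep ℝ v hv
  rw [pchart, ← ha, Units.smul_def, map_smul, smul_eq_mul, mul_inv_rev, smul_smul,
    inv_mul_cancel_right₀ a.ne_zero]

lemma pchart_mk_of_map_eq_one {v : Vd d} (hv : v ≠ 0) (h1 : f v = 1) :
    pchart f (Projectivization.mk ℝ v hv) = v := by
  rw [pchart_mk, h1, inv_one, one_smul]

lemma map_pchart {x : Proj d} (hx : f x.rep ≠ 0) : f (pchart f x) = 1 := by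
  simp [pchart, hx]

lemma ne_zero_of_map_eq_one {v : Vd d} (h1 : f v = 1) : v ≠ 0 := by
  rintro rfl
  simp at h1

lemma mk_pchart {x : Proj d} (hx : f x.rep ≠ 0) :
    Projectivization.mk ℝ (pchart f x) (ne_zero_of_map_eq_one f (map_pchart f hx)) = x := by
  conv_rhs => rw [← Projectivization.mk_rep x]
  exact (Projectivization.mk_eq_mk_iff' ℝ _ _ _ _).2 ⟨(f x.rep)⁻¹, rfl⟩

lemma pchart_injOn : InjOn (pchart f) {x | f x.rep ≠ 0} := by
  intro x hx y hy hxy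
  rw [← mk_pchart f hx, ← mk_pchart f hy]
  congr 1

lemma isQuotientMap_mk' :
    IsQuotientMap (Projectivization.mk' ℝ : {v : Vd d // v ≠ 0} → Proj d) :=
  isQuotientMap_quotient_mk'

lemma map_mk_rep_ne_zero_iff {v : Vd d} (hv : v ≠ 0) :
    f (Projectivization.mk ℝ v hv).rep ≠ 0 ↔ f v ≠ 0 := by
  obtain ⟨a, ha⟩ := Projectivization.exists_smul_eq_mk_rep ℝ v hv
  rw [← ha, Units.smul_def, map_smul, smul_eq_mul]
  exact ⟨right_ne_zero_of_mul, mul_ne_zero a.ne_zero⟩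

lemma isOpen_setOf_pchart_mem {O : Set (Vd d)} (hO : IsOpen O) :
    IsOpen {x : Proj d | f x.rep ≠ 0 ∧ pchart f x ∈ O} := by
  rw [← isQuotientMap_mk'.isOpen_preimage]
  have hpre : Projectivization.mk' ℝ ⁻¹' {x : Proj d | f x.rep ≠ 0 ∧ pchart f x ∈ O} =
      Subtype.val ⁻¹' ({v | f v ≠ 0} ∩ (fun v => (f v)⁻¹ • v) ⁻¹' O) := by
    ext v
    simp only [mem_preimage, mem_ofPred_eq, mem_inter_iff, Projectivization.mk'_eq_mk,
      map_mk_rep_ne_zero_iff, pchart_mk]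
  have hcont : ContinuousOn (fun v : Vd d => (f v)⁻¹ • v) {v | f v ≠ 0} :=
    (f.continuous_of_finiteDimensional.continuousOn.inv₀ fun _ hv => hv).smul continuousOn_id
  rw [hpre]
  exact (hcont.isOpen_inter_preimage
    (isOpen_ne_fun f.continuous_of_finiteDimensional continuous_const) hO).preimage
    continuous_subtype_val

lemma continuousAt_pchart {x : Proj d} (hx : f x.rep ≠ 0) : ContinuousAt (pchart f) x :=
  tendsto_nhds.2 fun _ hO hxO =>
    mem_of_superset ((isOpen_setOf_pchart_mem f hO).mem_nhds ⟨hx, hxO⟩) fun _ hy => hy.2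

lemma pchart_mem_closure_image {S : Set (Proj d)} {x : Proj d} (hx : x ∈ closure S)
    (hfx : f x.rep ≠ 0) : pchart f x ∈ closure (pchart f '' S) :=
  mem_closure_image (continuousAt_pchart f hfx) hx

lemma mem_closure_of_pchart_mem_closure {S : Set (Proj d)} (hS : ∀ x ∈ S, f x.rep ≠ 0)
    {x : Proj d} (hx : f x.rep ≠ 0) (h : pchart f x ∈ closure (pchart f '' S)) :
    x ∈ closure S := by
  set T : Set {v : Vd d // v ≠ 0} := Subtype.val ⁻¹' (pchart f '' S)
  have hT : (⟨pchart f x, ne_zero_of_map_eq_one f (map_pchart f hx)⟩ : {v : Vd d // v ≠ 0}) ∈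
      closure T := by
    refine closure_subtype.2 (closure_mono (fun v hv => ?_) h)
    obtain ⟨y, hy, rfl⟩ := hv
    exact ⟨⟨_, ne_zero_of_map_eq_one f (map_pchart f (hS y hy))⟩, ⟨y, hy, rfl⟩, rfl⟩
  have hmaps : MapsTo (Projectivization.mk' ℝ) T S := by
    rintro ⟨v, hv⟩ ⟨y, hy, rfl⟩
    rwa [Projectivization.mk'_eq_mk, mk_pchart f (hS y hy)]
  simpa [Projectivization.mk'_eq_mk, mk_pchart f hx] using
    map_mem_closure isQuotientMap_mk'.continuous hT hmaps

end Chart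

section Domain

variable {f : Vd d →ₗ[ℝ] ℝ} {Ω : Set (Proj d)}

lemma IsPC.map_eq_one_of_mem_closure (hpc : IsPC f Ω) {v : Vd d}
    (hv : v ∈ closure (pchart f '' Ω)) : f v = 1 := by
  refine closure_minimal ?_ (isClosed_eq f.continuous_of_finiteDimensional continuous_const) hv
  rintro _ ⟨x, hx, rfl⟩
  exact map_pchart f (hpc.chartOK x (subset_closure hx))

lemma IsPCDomain.pchart_notMem_image_of_mem_frontier (hdom : IsPCDomain f Ω) {x : Proj d}
    (hx : x ∈ frontier Ω) : pchart f x ∉ pchart f '' Ω := by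
  rintro ⟨p, hp, hpx⟩
  rw [pchart_injOn f (hdom.pc.chartOK p (subset_closure hp))
    (hdom.pc.chartOK x (frontier_subset_closure hx)) hpx] at hp
  exact (hdom.isOpen.frontier_eq ▸ hx).2 hp

lemma IsPCDomain.eventually_mem_image (hdom : IsPCDomain f Ω) {u : Vd d}
    (hu : u ∈ pchart f '' Ω) : ∀ᶠ v in 𝓝 u, f v = 1 → v ∈ pchart f '' Ω := by
  obtain ⟨x, hx, rfl⟩ := hu
  have hfx := hdom.pc.chartOK x (subset_closure hx)
  have hcone : IsOpen (Subtype.val '' (Projectivization.mk' ℝ ⁻¹' Ω : Set {v : Vd d // v ≠ 0})) :=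
    isOpen_ne.isOpenMap_subtype_val _ (hdom.isOpen.preimage isQuotientMap_mk'.continuous)
  have hxcone : pchart f x ∈ Subtype.val '' (Projectivization.mk' ℝ ⁻¹' Ω) :=
    ⟨⟨_, ne_zero_of_map_eq_one f (map_pchart f hfx)⟩, by
      rwa [mem_preimage, Projectivization.mk'_eq_mk, mk_pchart f hfx], rfl⟩
  filter_upwards [hcone.mem_nhds hxcone] with v ⟨⟨w, hw⟩, hwΩ, hwv⟩ hfw
  subst hwv
  exact ⟨_, hwΩ, by rw [Projectivization.mk'_eq_mk, pchart_mk_of_map_eq_one f hw hfw]⟩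

lemma IsPCDomain.eventually_add_smul_sub_mem (hdom : IsPCDomain f Ω) {q w : Vd d}
    (hq : q ∈ pchart f '' Ω) (hw : w ∈ closure (pchart f '' Ω)) :
    ∀ᶠ l in 𝓝 (0 : ℝ), q + l • (q - w) ∈ pchart f '' Ω := by
  have hlim : Tendsto (fun l : ℝ => q + l • (q - w)) (𝓝 0) (𝓝 q) := by
    simpa using ((continuous_id.smul continuous_const).const_add q).tendsto (0 : ℝ)
  have hfq := hdom.pc.map_eq_one_of_mem_closure (subset_closure hq)
  have hfw := hdom.pc.map_eq_one_of_mem_closure hw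
  filter_upwards [hlim.eventually (hdom.eventually_mem_image hq)] with l hl
  exact hl (by simp [hfq, hfw])

lemma IsPCDomain.add_smul_sub_mem_image (hdom : IsPCDomain f Ω) {u v : Vd d}
    (hu : u ∈ pchart f '' Ω) (hv : v ∈ closure (pchart f '' Ω)) {t : ℝ} (ht0 : 0 ≤ t)
    (ht1 : t < 1) : u + t • (v - u) ∈ pchart f '' Ω := by
  rcases ht0.eq_or_lt with rfl | ht0
  · simpa using hu
  have h1t : 0 < 1 - t := sub_pos.2 ht1
  have hfu := hdom.pc.map_eq_one_of_mem_closure (subset_closure hu)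
  have hfv := hdom.pc.map_eq_one_of_mem_closure hv
  have hlim : Tendsto (fun v' => u + (t / (1 - t)) • (v - v')) (𝓝 v) (𝓝 u) := by
    simpa using ((continuous_const.sub continuous_id : Continuous fun v' => v - v').const_smul
      (t / (1 - t))
      |>.const_add u).tendsto v
  have := mem_closure_iff_nhdsWithin_neBot.1 hv
  obtain ⟨v', hu', hv'⟩ := ((hlim.eventually (hdom.eventually_mem_image hu)).filter_mono
    nhdsWithin_le_nhds |>.and (self_mem_nhdsWithin (s := pchart f '' Ω))).exists
  have hfv' := hdom.pc.map_eq_one_of_mem_closure (subset_closure hv')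
  -- `u + t (v - u)` is a convex combination of `v'` and a point `u'` of the chart near `u`
  convert hdom.pc.convex (hu' (by simp [hfu, hfv, hfv'])) hv' h1t.le ht0.le (by ring) using 1
  rw [smul_add, smul_smul, mul_div_cancel₀ _ h1t.ne']
  module

end Domain

section HilbertDist

variable {K : Set (Vd d)}

lemma affHilbertDist_self (K : Set (Vd d)) (x : Vd d) : affHilbertDist K x x = 0 :=
  if_pos rfl

lemma isBounded_segSet (hK : Bornology.IsBounded K) {x y : Vd d} (hxy : x ≠ y) :
    Bornology.IsBounded (segSet K x y) := by
  obtain ⟨R, hR⟩ := hK.closure.exists_norm_le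
  have hyx : 0 < ‖y - x‖ := norm_pos_iff.2 (sub_ne_zero.2 hxy.symm)
  refine (Metric.isBounded_closedBall (x := (0 : ℝ)) (r := (R + ‖x‖) / ‖y - x‖)).subset
    fun t ht => ?_
  rw [mem_closedBall_zero_iff, le_div_iff₀ hyx, ← norm_smul]
  calc ‖t • (y - x)‖ = ‖(x + t • (y - x)) - x‖ := by rw [add_sub_cancel_left]
    _ ≤ ‖x + t • (y - x)‖ + ‖x‖ := norm_sub_le _ _
    _ ≤ R + ‖x‖ := by gcongr; exact hR _ ht

lemma div_sub_one_le_div_sub_one {a b : ℝ} (ha : 1 < a) (hab : a ≤ b) :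
    b / (b - 1) ≤ a / (a - 1) := by
  rw [div_le_div_iff₀ (by linarith) (by linarith)]
  linarith

lemma affHilbertDist_of_ne {x y : Vd d} (hxy : x ≠ y) :
    affHilbertDist K x y = 1 / 2 * Real.log
      (sSup (segSet K x y) / (sSup (segSet K x y) - 1) *
        ((1 - sInf (segSet K x y)) / ((1 - sInf (segSet K x y)) - 1))) := by
  rw [affHilbertDist, if_neg hxy, mul_div_mul_comm, sub_sub_cancel_left]

lemma affHilbertDist_le_log (hK : Bornology.IsBounded K) {x y : Vd d} {l : ℝ} (hl : 0 < l)
    (hx : x + l • (x - y) ∈ closure K) (hy : y + l • (y - x) ∈ closure K) :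
    affHilbertDist K x y ≤ Real.log ((1 + l) / l) := by
  have hc : 1 ≤ (1 + l) / l := by rw [le_div_iff₀ hl]; linarith
  rcases eq_or_ne x y with rfl | hxy
  · rw [affHilbertDist_self]
    exact Real.log_nonneg hc
  have hbdd := isBounded_segSet hK hxy
  have hs : 1 + l ≤ sSup (segSet K x y) :=
    le_csSup hbdd.bddAbove (show x + (1 + l) • (y - x) ∈ closure K by convert hy using 1; module)
  have hr : 1 + l ≤ 1 - sInf (segSet K x y) := by
    have := csInf_le hbdd.bddBelow (show -l ∈ segSet K x y by
      show x + (-l) • (y - x) ∈ closure K; convert hx using 1; module)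
    linarith
  have hg : ∀ a, 1 + l ≤ a → 0 < a / (a - 1) ∧ a / (a - 1) ≤ (1 + l) / l := fun a ha =>
    ⟨div_pos (by linarith) (by linarith),
      by simpa using div_sub_one_le_div_sub_one (by linarith : 1 < 1 + l) ha⟩
  obtain ⟨hs0, hs1⟩ := hg _ hs
  obtain ⟨hr0, hr1⟩ := hg _ hr
  rw [affHilbertDist_of_ne hxy]
  calc 1 / 2 * Real.log _ ≤ 1 / 2 * Real.log ((1 + l) / l * ((1 + l) / l)) := by
        gcongr
    _ = Real.log ((1 + l) / l) := by
        rw [Real.log_mul (by positivity) (by positivity)]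
        ring

lemma neg_log_le_affHilbertDist (hK : Bornology.IsBounded K) {p v : Vd d} {τ t : ℝ}
    (hτ : 0 < τ) (hp : p + τ • (p - v) ∈ closure K) (hv : v ∈ closure K)
    (hmax : ∀ σ : ℝ, 1 < σ → p + σ • (v - p) ∉ closure K) (hpv : p ≠ v) (ht0 : 0 < t)
    (ht1 : t < 1) :
    -Real.log (1 - t) / 2 ≤ affHilbertDist K p (p + t • (v - p)) := by
  have hpy : p ≠ p + t • (v - p) := by
    simpa [eq_comm (a := p), sub_eq_zero, ht0.ne'] using hpv.symm
  have hmem : ∀ σ, σ ∈ segSet K p (p + t • (v - p)) ↔ p + (σ * t) • (v - p) ∈ closure K := by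
    intro σ
    simp only [segSet, mem_ofPred_eq, add_sub_cancel_left, smul_smul]
  have hbdd := isBounded_segSet hK hpy
  have hs : sSup (segSet K p (p + t • (v - p))) = 1 / t := by
    refine IsGreatest.csSup_eq ⟨(hmem _).2 (by simpa [ht0.ne'] using hv), fun σ hσ => ?_⟩
    rw [le_div_iff₀ ht0, ← not_lt]
    exact fun h => hmax (σ * t) h ((hmem σ).1 hσ)
  have hr : 1 < 1 - sInf (segSet K p (p + t • (v - p))) := by
    have := csInf_le hbdd.bddBelow ((hmem (-(τ / t))).2 (by
      convert hp using 1
      rw [neg_mul, div_mul_cancel₀ _ ht0.ne']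
      module))
    have : 0 < τ / t := div_pos hτ ht0
    linarith
  have hg : 1 ≤ (1 - sInf (segSet K p (p + t • (v - p)))) /
      ((1 - sInf (segSet K p (p + t • (v - p)))) - 1) := by
    rw [le_div_iff₀ (by linarith)]
    linarith
  have h1t : 0 < 1 - t := sub_pos.2 ht1
  have hst : 1 / t / (1 / t - 1) = (1 - t)⁻¹ := by
    field_simp
  rw [affHilbertDist_of_ne hpy, hs, hst]
  calc -Real.log (1 - t) / 2 = 1 / 2 * Real.log (1 - t)⁻¹ := by rw [Real.log_inv]; ring
    _ ≤ _ := by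
      gcongr
      exact le_mul_of_one_le_right (by positivity) hg

end HilbertDist

section ExtendsBeyond

variable {E : Type*} [AddCommGroup E] [Module ℝ E] {A : Set E} {u v w : E}

def ExtendsBeyond (A : Set E) (u w : E) : Prop := ∃ δ : ℝ, 0 < δ ∧ u + δ • (u - w) ∈ A

lemma extendsBeyond_self (hu : u ∈ A) : ExtendsBeyond A u u :=
  ⟨1, one_pos, by simpa using hu⟩

lemma extendsBeyond_of_mem_openSegment {a b : E} (hab : openSegment ℝ a b ⊆ A)
    (hu : u ∈ openSegment ℝ a b) (hw : w ∈ openSegment ℝ a b) : ExtendsBeyond A u w := by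
  rw [openSegment_eq_image'] at hu hw
  obtain ⟨θ, hθ, rfl⟩ := hu
  obtain ⟨θ', -, rfl⟩ := hw
  have hlim : Tendsto (fun δ : ℝ => θ + δ * (θ - θ')) (𝓝[>] 0) (𝓝 θ) :=
    tendsto_nhdsWithin_of_tendsto_nhds <| by
      simpa using ((continuous_id.mul continuous_const).const_add θ).tendsto (0 : ℝ)
  obtain ⟨δ, hδθ, hδ⟩ := ((hlim.eventually (Ioo_mem_nhds hθ.1 hθ.2)).and
    self_mem_nhdsWithin).exists
  refine ⟨δ, hδ, hab ?_⟩
  rw [openSegment_eq_image']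
  exact ⟨_, hδθ, by module⟩

lemma ExtendsBeyond.trans (hA : Convex ℝ A) (h₁ : ExtendsBeyond A u v)
    (h₂ : ExtendsBeyond A v w) : ExtendsBeyond A u w := by
  obtain ⟨α, hα, hu⟩ := h₁
  obtain ⟨β, hβ, hv⟩ := h₂
  -- the combination of `u + α (u - v)` and `v + β (v - w)` in which `v` cancels
  refine ⟨α * β / (1 + α + β), by positivity, ?_⟩
  convert hA hu hv (a := (1 + β) / (1 + α + β)) (b := α / (1 + α + β)) (by positivity)
    (by positivity) (by field_simp; ring) using 1
  match_scalars <;> field_simp <;> ring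

lemma ExtendsBeyond.eventually (hA : Convex ℝ A) (hu : u ∈ A) (h : ExtendsBeyond A u w) :
    ∀ᶠ l in 𝓝[>] (0 : ℝ), u + l • (u - w) ∈ A := by
  obtain ⟨δ, hδ, hδA⟩ := h
  filter_upwards [Ioo_mem_nhdsGT hδ] with l hl
  have := hA.add_smul_mem hu hδA ⟨div_nonneg hl.1.le hδ.le, (div_le_one hδ).2 hl.2.le⟩
  rwa [smul_smul, div_mul_cancel₀ _ hδ.ne'] at this

end ExtendsBeyond

section Faces

variable {f : Vd d →ₗ[ℝ] ℝ} {Ω : Set (Proj d)}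

lemma extendsBeyond_of_mem_pface (hpc : IsPC f Ω) {x y : Proj d} (hx : x ∈ closure Ω)
    (hy : y ∈ pface f Ω x) :
    ExtendsBeyond (closure (pchart f '' Ω)) (pchart f x) (pchart f y) ∧
      ExtendsBeyond (closure (pchart f '' Ω)) (pchart f y) (pchart f x) := by
  have hxA := pchart_mem_closure_image f hx (hpc.chartOK x hx)
  rcases hy with rfl | ⟨-, hxy | ⟨-, a, b, hab, hxab, hyab⟩⟩
  · exact ⟨extendsBeyond_self hxA, extendsBeyond_self hxA⟩
  · rw [hxy]
    exact ⟨extendsBeyond_self hxA, extendsBeyond_self hxA⟩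
  · exact ⟨extendsBeyond_of_mem_openSegment hab hxab hyab,
      extendsBeyond_of_mem_openSegment hab hyab hxab⟩

lemma eventually_mem_closure_of_mem_pface (hpc : IsPC f Ω) {x₁ x₂ y : Proj d}
    (hx₁ : x₁ ∈ closure Ω) (hx₂ : x₂ ∈ closure Ω) (hy₁ : y ∈ pface f Ω x₁)
    (hy₂ : y ∈ pface f Ω x₂) :
    ∀ᶠ l in 𝓝[>] (0 : ℝ),
      pchart f x₁ + l • (pchart f x₁ - pchart f x₂) ∈ closure (pchart f '' Ω) ∧
        pchart f x₂ + l • (pchart f x₂ - pchart f x₁) ∈ closure (pchart f '' Ω) := by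
  have hA := hpc.convex.closure
  obtain ⟨h₁y, hy₁⟩ := extendsBeyond_of_mem_pface hpc hx₁ hy₁
  obtain ⟨h₂y, hy₂⟩ := extendsBeyond_of_mem_pface hpc hx₂ hy₂
  exact ((h₁y.trans hA hy₂).eventually hA (pchart_mem_closure_image f hx₁ (hpc.chartOK _ hx₁))).and
    ((h₂y.trans hA hy₁).eventually hA (pchart_mem_closure_image f hx₂ (hpc.chartOK _ hx₂)))

end Faces

section Rays

variable {f : Vd d →ₗ[ℝ] ℝ} {Ω X X₁ X₂ : Set (Proj d)}

structure IsClosedConvexIn (f : Vd d →ₗ[ℝ] ℝ) (Ω X : Set (Proj d)) : Prop where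
  subset : X ⊆ Ω
  closure_inter_subset : closure X ∩ Ω ⊆ X
  convex : Convex ℝ (pchart f '' X)

lemma IsCUC.isClosedConvexIn {C : Set (Proj d)} {𝒳 : Set (Set (Proj d))}
    (h𝒳 : IsCUC f Ω C 𝒳) (hC : C ⊆ Ω) (hX : X ∈ 𝒳) : IsClosedConvexIn f Ω X :=
  ⟨(h𝒳.sub X hX).trans hC, h𝒳.closedIn X hX, h𝒳.convex X hX⟩

lemma HUnbounded.nonempty (hX : HUnbounded f Ω X) : X.Nonempty := by
  rw [nonempty_iff_ne_empty]
  rintro rfl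
  exact hX ⟨0, by simp [DiamLE]⟩

lemma IsClosedConvexIn.add_smul_sub_mem_image (hX : IsClosedConvexIn f Ω X)
    (hdom : IsPCDomain f Ω) {q v : Vd d} (hq : q ∈ pchart f '' X)
    (hv : v ∈ closure (pchart f '' X)) {t : ℝ} (ht0 : 0 ≤ t) (ht1 : t < 1) :
    q + t • (v - q) ∈ pchart f '' X := by
  have hXΩ : pchart f '' X ⊆ pchart f '' Ω := image_mono hX.subset
  obtain ⟨p, hpΩ, hp⟩ := hdom.add_smul_sub_mem_image (hXΩ hq) (closure_mono hXΩ hv) ht0 ht1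
  have hpX : pchart f p ∈ closure (pchart f '' X) := by
    rw [hp]
    exact hX.convex.closure.add_smul_sub_mem (subset_closure hq) hv ⟨ht0, ht1.le⟩
  refine ⟨p, hX.closure_inter_subset ⟨?_, hpΩ⟩, hp⟩
  exact mem_closure_of_pchart_mem_closure f
    (fun x hx => hdom.pc.chartOK x (subset_closure (hX.subset hx)))
    (hdom.pc.chartOK p (subset_closure hpΩ)) hpX

lemma affHilbertDist_add_smul_sub_le {K : Set (Vd d)} (hK : Bornology.IsBounded K)
    (hA : Convex ℝ (closure K)) {q₁ q₂ v₁ v₂ : Vd d} {l t : ℝ} (hl : 0 < l)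
    (hq₁ : q₁ + l • (q₁ - q₂) ∈ closure K) (hq₂ : q₂ + l • (q₂ - q₁) ∈ closure K)
    (hv₁ : v₁ + l • (v₁ - v₂) ∈ closure K) (hv₂ : v₂ + l • (v₂ - v₁) ∈ closure K)
    (ht0 : 0 ≤ t) (ht1 : t ≤ 1) :
    affHilbertDist K (q₁ + t • (v₁ - q₁)) (q₂ + t • (v₂ - q₂)) ≤ Real.log ((1 + l) / l) := by
  apply affHilbertDist_le_log hK hl
  · convert hA.add_smul_sub_mem hq₁ hv₁ ⟨ht0, ht1⟩ using 1
    module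
  · convert hA.add_smul_sub_mem hq₂ hv₂ ⟨ht0, ht1⟩ using 1
    module

lemma IsPCDomain.neg_log_le_affHilbertDist (hdom : IsPCDomain f Ω) {q v : Vd d}
    (hq : q ∈ pchart f '' Ω) (hv : v ∈ closure (pchart f '' Ω)) (hvΩ : v ∉ pchart f '' Ω)
    {t : ℝ} (ht0 : 0 < t) (ht1 : t < 1) :
    -Real.log (1 - t) / 2 ≤ affHilbertDist (pchart f '' Ω) q (q + t • (v - q)) := by
  obtain ⟨τ, hτ, hτ0⟩ := ((hdom.eventually_add_smul_sub_mem hq hv).filter_mono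
    nhdsWithin_le_nhds |>.and (self_mem_nhdsWithin (s := Ioi (0 : ℝ)))).exists
  refine _root_.neg_log_le_affHilbertDist hdom.pc.bounded hτ0 (subset_closure hτ) hv
    (fun σ (hσ : 1 < σ) hσK => hvΩ ?_) (fun h => hvΩ (h ▸ hq)) ht0 ht1
  have hσ0 : (0 : ℝ) < σ := one_pos.trans hσ
  convert hdom.add_smul_sub_mem_image hq hσK (inv_pos.2 hσ0).le (inv_lt_one_of_one_lt₀ hσ)
    using 1
  rw [add_sub_cancel_left, smul_smul, inv_mul_cancel₀ hσ0.ne', one_smul, add_sub_cancel]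

lemma IsPCDomain.hUnbounded_of_ray (hdom : IsPCDomain f Ω) {S : Set (Proj d)} {q v : Vd d}
    (hq : q ∈ pchart f '' Ω) (hv : v ∈ closure (pchart f '' Ω)) (hvΩ : v ∉ pchart f '' Ω)
    (hS : ∀ t : ℝ, 0 ≤ t → t < 1 → ∃ a ∈ S, pchart f a = q + t • (v - q)) :
    HUnbounded f Ω S := by
  rintro ⟨D, hD⟩
  -- a parameter `t` at which `-log (1 - t) / 2 = |D| + 1`
  set t := 1 - Real.exp (-(2 * (|D| + 1)))
  have ht0 : 0 < t := sub_pos.2 (Real.exp_lt_one_iff.2 (neg_neg_of_pos (by positivity)))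
  have ht1 : t < 1 := sub_lt_self _ (Real.exp_pos _)
  obtain ⟨a₀, ha₀, ha₀q⟩ := hS 0 le_rfl one_pos
  obtain ⟨a, ha, haq⟩ := hS t ht0.le ht1
  have hle := hD a₀ ha₀ a ha
  rw [hdist, ha₀q, haq, zero_smul, add_zero] at hle
  have hge := hdom.neg_log_le_affHilbertDist hq hv hvΩ ht0 ht1
  rw [sub_sub_cancel, Real.log_exp] at hge
  linarith [le_abs_self D]

lemma IsPCDomain.exists_hUnbounded_inter_hnbhd (hdom : IsPCDomain f Ω)
    (hX₁ : IsClosedConvexIn f Ω X₁) (hX₂ : IsClosedConvexIn f Ω X₂) {p₁ p₂ x₁ x₂ : Proj d}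
    (hp₁ : p₁ ∈ X₁) (hp₂ : p₂ ∈ X₂) (hx₁ : x₁ ∈ idealBdry Ω X₁) (hx₂ : x₂ ∈ idealBdry Ω X₂)
    (hext : ∀ᶠ l in 𝓝[>] (0 : ℝ),
      pchart f x₁ + l • (pchart f x₁ - pchart f x₂) ∈ closure (pchart f '' Ω) ∧
        pchart f x₂ + l • (pchart f x₂ - pchart f x₁) ∈ closure (pchart f '' Ω)) :
    ∃ r > 0, HUnbounded f Ω (hnbhd f Ω X₁ r ∩ hnbhd f Ω X₂ r) := by
  have hq₁ : pchart f p₁ ∈ pchart f '' Ω := mem_image_of_mem _ (hX₁.subset hp₁)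
  have hq₂ : pchart f p₂ ∈ pchart f '' Ω := mem_image_of_mem _ (hX₂.subset hp₂)
  obtain ⟨l, ⟨hv₁, hv₂⟩, ⟨hq₁', hq₂'⟩, hl⟩ := (hext.and
    (((hdom.eventually_add_smul_sub_mem hq₁ (subset_closure hq₂)).and
      (hdom.eventually_add_smul_sub_mem hq₂ (subset_closure hq₁))).filter_mono
        nhdsWithin_le_nhds |>.and self_mem_nhdsWithin)).exists
  have hv₁X : pchart f x₁ ∈ closure (pchart f '' X₁) :=
    pchart_mem_closure_image f hx₁.1 (hdom.pc.chartOK _ (closure_mono hX₁.subset hx₁.1))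
  have hv₂X : pchart f x₂ ∈ closure (pchart f '' X₂) :=
    pchart_mem_closure_image f hx₂.1 (hdom.pc.chartOK _ (closure_mono hX₂.subset hx₂.1))
  set r := Real.log ((1 + l) / l) + 1
  have hr : 0 < r := by
    have : 1 ≤ (1 + l) / l := by rw [le_div_iff₀ hl]; linarith
    linarith [Real.log_nonneg this]
  have hray : ∀ t : ℝ, 0 ≤ t → t < 1 → ∃ a ∈ hnbhd f Ω X₁ r ∩ hnbhd f Ω X₂ r,
      pchart f a = pchart f p₁ + t • (pchart f x₁ - pchart f p₁) := by
    intro t ht0 ht1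
    obtain ⟨a, ha, hav⟩ := hX₁.add_smul_sub_mem_image hdom ⟨p₁, hp₁, rfl⟩ hv₁X ht0 ht1
    obtain ⟨b, hb, hbv⟩ := hX₂.add_smul_sub_mem_image hdom ⟨p₂, hp₂, rfl⟩ hv₂X ht0 ht1
    refine ⟨a, ⟨⟨hX₁.subset ha, a, ha, ?_⟩, hX₁.subset ha, b, hb, ?_⟩, hav⟩
    · rwa [hdist, affHilbertDist_self]
    · rw [hdist, hav, hbv]
      exact (affHilbertDist_add_smul_sub_le hdom.pc.bounded hdom.pc.convex.closure hl
        (subset_closure hq₁') (subset_closure hq₂') hv₁ hv₂ ht0 ht1.le).trans_lt (lt_add_one _)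
  exact ⟨r, hr, hdom.hUnbounded_of_ray hq₁ (closure_mono (image_mono hX₁.subset) hv₁X)
    (hdom.pchart_notMem_image_of_mem_frontier hx₁.2) hray⟩

end Rays

theorem stmt_8_general {d : ℕ} (f : Vd d →ₗ[ℝ] ℝ) (Ω C : Set (Proj d)) (Γ : Subgroup (GLd d))
    (h : IsNCC f Ω C Γ) (𝒳 : Set (Set (Proj d))) (h𝒳 : IsCUC f Ω C 𝒳)
    (hiso : StronglyIsolated f Ω 𝒳)
    (X₁ X₂ : Set (Proj d)) (h₁ : X₁ ∈ 𝒳) (h₂ : X₂ ∈ 𝒳) (hne : X₁ ≠ X₂) :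
    pfaceSet f Ω (idealBdry Ω X₁) ∩ pfaceSet f Ω (idealBdry Ω X₂) = ∅ := by
  refine eq_empty_iff_forall_notMem.2 fun y ⟨hy₁, hy₂⟩ => ?_
  obtain ⟨x₁, hx₁, hyx₁⟩ := mem_iUnion₂.1 hy₁
  obtain ⟨x₂, hx₂, hyx₂⟩ := mem_iUnion₂.1 hy₂
  have hX₁ := h𝒳.isClosedConvexIn h.subset h₁
  have hX₂ := h𝒳.isClosedConvexIn h.subset h₂
  obtain ⟨p₁, hp₁⟩ := (h𝒳.unbdd X₁ h₁).nonempty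
  obtain ⟨p₂, hp₂⟩ := (h𝒳.unbdd X₂ h₂).nonempty
  obtain ⟨r, hr, hunb⟩ := h.dom.exists_hUnbounded_inter_hnbhd hX₁ hX₂ hp₁ hp₂ hx₁ hx₂
    (eventually_mem_closure_of_mem_pface h.dom.pc (closure_mono hX₁.subset hx₁.1)
      (closure_mono hX₂.subset hx₂.1) hyx₁ hyx₂)
  obtain ⟨D, -, hD⟩ := hiso r hr
  exact hunb ⟨D, hD X₁ h₁ X₂ h₂ hne⟩

/-- distinct members of a Γ-invariant strongly isolated collection of closed
unbounded convex subsets of `C` have disjoint sets of faces of their ideal boundaries. -/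
theorem stmt_8 {d : ℕ} (f : Vd d →ₗ[ℝ] ℝ) (Ω C : Set (Proj d)) (Γ : Subgroup (GLd d))
    (h : IsNCC f Ω C Γ) (𝒳 : Set (Set (Proj d))) (h𝒳 : IsCUC f Ω C 𝒳)
    (hinv : GInvariant Γ 𝒳) (hiso : StronglyIsolated f Ω 𝒳)
    (X₁ X₂ : Set (Proj d)) (h₁ : X₁ ∈ 𝒳) (h₂ : X₂ ∈ 𝒳) (hne : X₁ ≠ X₂) :
    pfaceSet f Ω (idealBdry Ω X₁) ∩ pfaceSet f Ω (idealBdry Ω X₂) = ∅ :=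
  stmt_8_general f Ω C Γ h 𝒳 h𝒳 hiso X₁ X₂ h₁ h₂ hne
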